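/- arXiv:1504.07697 — 2 statements merged into one kernel-verified Lean document; each statement's English description precedes it below -/
import Mathlib

section
/- Let h ∈ F_q[t] be a monic squarefree polynomial with factorization h = p_1 ⋯ p_m into distinct monic irreducible polynomials, and let s = min_i deg(p_i). Suppose for each i we are given a polynomial c_i ∈ F_q[t] with deg(c_i) ≤ deg(p_i)/2. Then the polynomial ∏_i (p_i + c_i) is monic of the same degree as h, and deg(h - ∏_i (p_i + c_i)) ≤ deg(h) - ⌈s/2⌉. -/
/-!
Write `qᵢ = pᵢ + cᵢ`. Irreducible polynomials have positive degree, so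
`deg cᵢ ≤ deg pᵢ / 2 < deg pᵢ` and each `qᵢ` is monic of the same degree as `pᵢ`.
For the difference, expand `∏ pᵢ - ∏ qᵢ` one factor at a time:
`p P - q Q = p (P - Q) + (p - q) Q`. If every `pᵢ - qᵢ` has degree at least `k` below `deg pᵢ`,
induction shows that `∏ pᵢ - ∏ qᵢ` has degree at least `k` below `∑ deg pᵢ`. Here `k = ⌈s/2⌉`
works because `deg pᵢ / 2 + ⌈s/2⌉ ≤ deg pᵢ` whenever `s ≤ deg pᵢ`.
-/

open Polynomial

namespace Polynomial

variable {R : Type*} [CommRing R] {ι : Type*}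

theorem degree_prod_sub_prod_add_le [DecidableEq ι] (s : Finset ι) (p q : ι → R[X]) (k : ℕ)
    (hq : ∀ i ∈ s, (q i).natDegree ≤ (p i).natDegree)
    (hpq : ∀ i ∈ s, (p i - q i).degree + k ≤ (p i).natDegree) :
    (∏ i ∈ s, p i - ∏ i ∈ s, q i).degree + k ≤ ((∑ i ∈ s, (p i).natDegree : ℕ) : WithBot ℕ) := by
  induction s using Finset.induction_on with
  | empty => simp
  | @insert a s ha ih =>
    set P := ∏ i ∈ s, p i
    set Q := ∏ i ∈ s, q i
    set N := ∑ i ∈ s, (p i).natDegree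
    have hP : (P - Q).degree + k ≤ N :=
      ih (fun i hi ↦ hq i (Finset.mem_insert_of_mem hi))
        (fun i hi ↦ hpq i (Finset.mem_insert_of_mem hi))
    have hQ : Q.degree ≤ N := degree_le_of_natDegree_le <|
      (natDegree_prod_le (s := s) (f := q)).trans
        (Finset.sum_le_sum fun i hi ↦ hq i (Finset.mem_insert_of_mem hi))
    have hpa := hpq a (Finset.mem_insert_self a s)
    have hsplit : p a * P - q a * Q = p a * (P - Q) + (p a - q a) * Q := by ring
    rw [Finset.prod_insert ha, Finset.prod_insert ha, Finset.sum_insert ha, hsplit, Nat.cast_add]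
    refine (add_le_add_left (degree_add_le _ _) _).trans ?_
    rw [← max_add_add_right]
    refine max_le ?_ ?_
    · calc (p a * (P - Q)).degree + k ≤ (p a).degree + ((P - Q).degree + k) := by
            rw [← add_assoc]; exact add_le_add_left (degree_mul_le _ _) _
        _ ≤ (p a).natDegree + N := add_le_add degree_le_natDegree hP
    · calc ((p a - q a) * Q).degree + k ≤ ((p a - q a).degree + k) + Q.degree := by
            rw [add_right_comm]; exact add_le_add_left (degree_mul_le _ _) _
        _ ≤ (p a).natDegree + N := add_le_add hpa hQ

end Polynomial

theorem WithBot.le_coe_sub_of_add_le {d : WithBot ℕ} {k n : ℕ} (h : d + k ≤ n) :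
    d ≤ ((n - k : ℕ) : WithBot ℕ) := by
  induction d using WithBot.recBotCoe with
  | bot => exact bot_le
  | coe d =>
    rw [Nat.cast_withBot, Nat.cast_withBot, ← WithBot.coe_add, WithBot.coe_le_coe] at h
    rw [Nat.cast_withBot, WithBot.coe_le_coe]
    omega

theorem stmt0_general {F : Type*} [Field F] {m : ℕ} (hm : 0 < m)
    (p : Fin m → F[X]) (hmon : ∀ i, (p i).Monic) (hirr : ∀ i, Irreducible (p i))
    (h : F[X]) (hh : h = ∏ i, p i)
    (c : Fin m → F[X]) (hc : ∀ i, (c i).degree ≤ ((p i).natDegree / 2 : ℕ))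
    (s : ℕ) (hs : s = Finset.univ.inf' ⟨⟨0, hm⟩, Finset.mem_univ _⟩ fun i => (p i).natDegree) :
    (∏ i, (p i + c i)).Monic ∧ (∏ i, (p i + c i)).natDegree = h.natDegree ∧
      (h - ∏ i, (p i + c i)).degree ≤ ((h.natDegree - (s + 1) / 2 : ℕ) : WithBot ℕ) := by
  set k := (s + 1) / 2
  have hpos : ∀ i, 0 < (p i).natDegree := fun i ↦ (hirr i).natDegree_pos
  have hcp : ∀ i, (c i).degree + k ≤ (p i).natDegree := fun i ↦ by
    have hsi : s ≤ (p i).natDegree := hs ▸ Finset.inf'_le _ (Finset.mem_univ i)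
    calc (c i).degree + k ≤ (((p i).natDegree / 2 + k : ℕ) : WithBot ℕ) := by
          push_cast; exact add_le_add_left (hc i) _
      _ ≤ (p i).natDegree := by gcongr; omega
  have hlt : ∀ i, (c i).degree < (p i).degree := fun i ↦ by
    rw [degree_eq_natDegree (hmon i).ne_zero]
    exact (hc i).trans_lt (by exact_mod_cast Nat.div_lt_self (hpos i) one_lt_two)
  have hq : ∀ i, (p i + c i).Monic := fun i ↦ (hmon i).add_of_left (hlt i)
  have hqdeg : ∀ i, (p i + c i).natDegree = (p i).natDegree :=
    fun i ↦ natDegree_add_eq_left_of_degree_lt (hlt i)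
  have hN : h.natDegree = ∑ i, (p i).natDegree := hh ▸ natDegree_prod_of_monic _ _ fun i _ ↦ hmon i
  refine ⟨monic_prod_of_monic _ _ fun i _ ↦ hq i, ?_, ?_⟩
  · rw [natDegree_prod_of_monic _ _ fun i _ ↦ hq i, hN]
    exact Finset.sum_congr rfl fun i _ ↦ hqdeg i
  · rw [hN, hh]
    refine WithBot.le_coe_sub_of_add_le <|
      degree_prod_sub_prod_add_le _ _ _ k (fun i _ ↦ (hqdeg i).le) fun i _ ↦ ?_
    rw [sub_add_cancel_left, degree_neg]
    exact hcp i

/-- If `h = ∏ pᵢ` is monic squarefree with distinct monic irreducible factors `pᵢ`,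
`s` the minimal factor degree, and `deg cᵢ ≤ deg pᵢ / 2`, then `∏ (pᵢ + cᵢ)` is monic
of the same degree as `h`, and `deg(h - ∏(pᵢ + cᵢ)) ≤ deg h - ⌈s/2⌉`. -/
theorem stmt0 {F : Type*} [Field F] {m : ℕ} (hm : 0 < m)
    (p : Fin m → F[X]) (hmon : ∀ i, (p i).Monic) (hirr : ∀ i, Irreducible (p i))
    (hdist : Function.Injective p)
    (h : F[X]) (hh : h = ∏ i, p i)
    (c : Fin m → F[X]) (hc : ∀ i, (c i).degree ≤ ((p i).natDegree / 2 : ℕ))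
    (s : ℕ) (hs : s = Finset.univ.inf' ⟨⟨0, hm⟩, Finset.mem_univ _⟩ fun i => (p i).natDegree) :
    (∏ i, (p i + c i)).Monic ∧ (∏ i, (p i + c i)).natDegree = h.natDegree ∧
      (h - ∏ i, (p i + c i)).degree ≤ ((h.natDegree - (s + 1) / 2 : ℕ) : WithBot ℕ) :=
  stmt0_general hm p hmon hirr h hh c hc s hs
end

section
/- Let q be an odd prime power and p ∈ F_q[t] monic irreducible of degree d. The number of pairs (a, ε) ∈ F_q[t] × F_q^× with deg(a) ≤ ⌊d/2⌋, deg(a² - 4εp) = d, and gcd(a² - 4εp, a - 2) = 1 is at least (q - 2 - d/2)·q^{⌊d/2⌋+1} if d is even, and at least (q - 1 - ⌈d/2⌉)·q^{⌊d/2⌋+1} if d is odd. -/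
open Polynomial Finset

open scoped Classical in
/-- Auxiliary: per-`a` bound on the number of bad `ε`. -/
theorem auxBad {F : Type*} [Field F] [Fintype F]
    (h4 : (4 : F) ≠ 0) {p : F[X]} (hp : p.Monic) (hpirr : Irreducible p)
    {d m : ℕ} (hd : p.natDegree = d) (h1 : 1 ≤ d) (hmd : 2 * m ≤ d)
    {a : F[X]} (ha2 : a ≠ 2) (ham : a.natDegree ≤ m) :
    Fintype.card Fˣ - (m + 1) ≤ (Finset.univ.filter (fun ε : Fˣ =>
        (a ^ 2 - C (4 * (ε : F)) * p).degree = (d : WithBot ℕ) ∧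
        IsCoprime (a ^ 2 - C (4 * (ε : F)) * p) (a - 2))).card ∧
    (2 * m < d → Fintype.card Fˣ - m ≤ (Finset.univ.filter (fun ε : Fˣ =>
        (a ^ 2 - C (4 * (ε : F)) * p).degree = (d : WithBot ℕ) ∧
        IsCoprime (a ^ 2 - C (4 * (ε : F)) * p) (a - 2))).card) := by
  classical
  set f : Fˣ → F[X] := fun ε => a ^ 2 - C (4 * (ε : F)) * p with hf
  set P : Fˣ → Prop := fun ε => (f ε).degree = (d : WithBot ℕ) ∧ IsCoprime (f ε) (a - 2)
    with hP
  have hcompl : (Finset.univ.filter P).card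
      + (Finset.univ.filter (fun ε => ¬ P ε)).card = Fintype.card Fˣ := by
    rw [Finset.card_filter_add_card_filter_not, card_univ]
  have hpne : p ≠ 0 := hp.ne_zero
  have hdegp : p.degree = (d : WithBot ℕ) := by rw [degree_eq_natDegree hpne, hd]
  have ha2deg : (a ^ 2).degree ≤ ((2 * m : ℕ) : WithBot ℕ) := by
    rw [pow_two]
    refine (degree_mul_le a a).trans ?_
    have h' : a.degree ≤ (m : ℕ) := degree_le_natDegree.trans (by exact_mod_cast ham)
    calc a.degree + a.degree ≤ (m : WithBot ℕ) + (m : WithBot ℕ) := add_le_add h' h'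
      _ = ((2 * m : ℕ) : WithBot ℕ) := by push_cast; ring
  -- degree-bad set
  have hBdeg_sub : ∀ ε : Fˣ, (f ε).degree ≠ (d : WithBot ℕ) →
      (4 : F) * ε = (a ^ 2).coeff d := by
    intro ε hne
    have h40 : (4 : F) * ε ≠ 0 := mul_ne_zero h4 ε.ne_zero
    have hdegC : (C (4 * (ε : F)) * p).degree = (d : WithBot ℕ) := by
      rw [degree_C_mul h40, hdegp]
    have hle : (f ε).degree ≤ (d : WithBot ℕ) := by
      refine (degree_sub_le _ _).trans ?_
      rw [max_le_iff]
      exact ⟨ha2deg.trans (by exact_mod_cast hmd), le_of_eq hdegC⟩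
    have hlt : (f ε).degree < (d : WithBot ℕ) := lt_of_le_of_ne hle hne
    have hc0 : (f ε).coeff d = 0 := coeff_eq_zero_of_degree_lt hlt
    have hpc : p.coeff d = 1 := by rw [← hd]; exact hp.coeff_natDegree
    have h' : (a ^ 2).coeff d - 4 * (ε : F) * p.coeff d = 0 := by
      simpa only [hf, coeff_sub, coeff_C_mul] using hc0
    rw [hpc, mul_one] at h'
    exact (sub_eq_zero.mp h').symm
  have hBdeg_card : (Finset.univ.filter
      (fun ε : Fˣ => (f ε).degree ≠ (d : WithBot ℕ))).card ≤ 1 := by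
    refine Finset.card_le_one.mpr ?_
    intro ε₁ h₁ ε₂ h₂
    simp only [mem_filter, mem_univ, true_and] at h₁ h₂
    have h' : (4 : F) * ε₁ = 4 * ε₂ := (hBdeg_sub ε₁ h₁).trans (hBdeg_sub ε₂ h₂).symm
    exact Units.ext (mul_left_cancel₀ h4 h')
  have hBdeg_empty : 2 * m < d → (Finset.univ.filter
      (fun ε : Fˣ => (f ε).degree ≠ (d : WithBot ℕ))) = ∅ := by
    intro hlt
    refine Finset.filter_eq_empty_iff.mpr ?_
    intro ε _
    have h40 : (4 : F) * ε ≠ 0 := mul_ne_zero h4 ε.ne_zero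
    have hc : (a ^ 2).coeff d = 0 :=
      coeff_eq_zero_of_degree_lt (lt_of_le_of_lt ha2deg (by exact_mod_cast hlt))
    intro hne
    exact h40 (by rw [hBdeg_sub ε hne, hc])
  -- coprime-bad set
  have ha2ne : a - 2 ≠ 0 := sub_ne_zero.mpr ha2
  have hdeg_a2 : (a - 2).natDegree ≤ m := by
    refine (natDegree_sub_le a 2).trans ?_
    simpa using ham
  set B := Finset.univ.filter (fun ε : Fˣ => ¬ IsCoprime (f ε) (a - 2)) with hB
  set g : Fˣ → F[X] := fun ε => EuclideanDomain.gcd (f ε) (a - 2) with hg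
  have hgdvd : ∀ ε, g ε ∣ a - 2 := fun ε => EuclideanDomain.gcd_dvd_right _ _
  have hgdvdf : ∀ ε, g ε ∣ f ε := fun ε => EuclideanDomain.gcd_dvd_left _ _
  have hgne : ∀ ε, g ε ≠ 0 := by
    intro ε h
    exact ha2ne (EuclideanDomain.gcd_eq_zero_iff.mp h).2
  have hgnu : ∀ ε ∈ B, ¬ IsUnit (g ε) := by
    intro ε hε
    simp only [hB, mem_filter, mem_univ, true_and] at hε
    exact fun h => hε (EuclideanDomain.gcd_isUnit_iff.mp h)
  have key : ∀ (ε₁ ε₂ : Fˣ), ε₁ ≠ ε₂ → ∀ h : F[X], h ∣ f ε₁ → h ∣ f ε₂ → h ∣ p := by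
    intro ε₁ ε₂ hne h h1' h2'
    have hdvd : h ∣ f ε₂ - f ε₁ := dvd_sub h2' h1'
    have hc : (4 : F) * ε₁ - 4 * ε₂ ≠ 0 := by
      intro hc
      apply hne
      exact Units.ext (mul_left_cancel₀ h4 (sub_eq_zero.mp hc))
    have heq : f ε₂ - f ε₁ = C ((4 : F) * ε₁ - 4 * ε₂) * p := by
      simp only [hf]
      rw [map_sub]
      ring
    rw [heq] at hdvd
    have h' : h ∣ C ((4 : F) * ε₁ - 4 * ε₂)⁻¹ *
        (C ((4 : F) * ε₁ - 4 * ε₂) * p) := hdvd.mul_left _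
    rwa [← mul_assoc, ← map_mul, inv_mul_cancel₀ hc, map_one, one_mul] at h'
  have hmltd : m < d := by omega
  have hpair : (↑B : Set Fˣ).Pairwise (Function.onFun IsCoprime g) := by
    intro ε₁ _ ε₂ _ hne
    by_contra hcop
    set h := EuclideanDomain.gcd (g ε₁) (g ε₂) with hh
    have hhu : ¬ IsUnit h := fun hu => hcop (EuclideanDomain.gcd_isUnit_iff.mp hu)
    have hh1 : h ∣ g ε₁ := EuclideanDomain.gcd_dvd_left _ _
    have hh2 : h ∣ g ε₂ := EuclideanDomain.gcd_dvd_right _ _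
    have hhp : h ∣ p := key ε₁ ε₂ hne h (hh1.trans (hgdvdf ε₁)) (hh2.trans (hgdvdf ε₂))
    obtain ⟨k, hk⟩ := hhp
    rcases hpirr.isUnit_or_isUnit hk with hu | hu
    · exact hhu hu
    · have hh0 : h ≠ 0 := fun h0 => hpne (by rw [hk, h0, zero_mul])
      have hk0 : k ≠ 0 := fun h0 => hpne (by rw [hk, h0, mul_zero])
      have hnd := congrArg natDegree hk
      rw [natDegree_mul hh0 hk0] at hnd
      have hk0' : k.natDegree = 0 :=
        natDegree_eq_of_degree_eq_some (by exact_mod_cast degree_eq_zero_of_isUnit hu)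
      have hhle : h.natDegree ≤ (a - 2).natDegree :=
        natDegree_le_of_dvd (hh1.trans (hgdvd ε₁)) ha2ne
      omega
  have hcard_B : B.card ≤ m := by
    have hprod : (∏ ε ∈ B, g ε) ∣ a - 2 :=
      Finset.prod_dvd_of_coprime hpair (fun ε _ => hgdvd ε)
    have hnd : (∏ ε ∈ B, g ε).natDegree = ∑ ε ∈ B, (g ε).natDegree :=
      natDegree_prod _ _ (fun ε _ => hgne ε)
    have hone : ∀ ε ∈ B, 1 ≤ (g ε).natDegree := by
      intro ε hε
      by_contra hcon
      push_neg at hcon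
      have h0 : (g ε).natDegree = 0 := by omega
      have hC := eq_C_of_natDegree_eq_zero h0
      apply hgnu ε hε
      rw [hC]
      refine isUnit_C.mpr (isUnit_iff_ne_zero.mpr ?_)
      intro hc
      exact hgne ε (by rw [hC, hc, map_zero])
    calc B.card = ∑ _ε ∈ B, 1 := by simp
      _ ≤ ∑ ε ∈ B, (g ε).natDegree := Finset.sum_le_sum hone
      _ = (∏ ε ∈ B, g ε).natDegree := hnd.symm
      _ ≤ (a - 2).natDegree := natDegree_le_of_dvd hprod ha2ne
      _ ≤ m := hdeg_a2
  have hsub : Finset.univ.filter (fun ε => ¬ P ε) ⊆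
      (Finset.univ.filter fun ε : Fˣ => (f ε).degree ≠ (d : WithBot ℕ)) ∪ B := by
    intro ε hε
    simp only [hP, mem_filter, mem_univ, true_and, not_and_or] at hε
    simp only [hB, mem_union, mem_filter, mem_univ, true_and]
    exact hε
  have hgoal : (Finset.univ.filter (fun ε : Fˣ =>
      (a ^ 2 - C (4 * (ε : F)) * p).degree = (d : WithBot ℕ) ∧
      IsCoprime (a ^ 2 - C (4 * (ε : F)) * p) (a - 2))) = Finset.univ.filter P := rfl
  rw [hgoal]
  constructor
  · have hbad : (Finset.univ.filter (fun ε => ¬ P ε)).card ≤ 1 + m := by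
      refine (Finset.card_le_card hsub).trans ?_
      refine (Finset.card_union_le _ _).trans ?_
      omega
    omega
  · intro hlt
    have hbad : (Finset.univ.filter (fun ε => ¬ P ε)).card ≤ m := by
      refine (Finset.card_le_card hsub).trans ?_
      rw [hBdeg_empty hlt]
      simpa using hcard_B
    omega

/-- Auxiliary: for constant `a = C c` with `c ≠ 2`, every `ε` is good. -/
theorem auxConst {F : Type*} [Field F] [Fintype F]
    (h4 : (4 : F) ≠ 0) {p : F[X]} (hp : p.Monic)
    {d : ℕ} (hd : p.natDegree = d) (h1 : 1 ≤ d) {c : F} (hc : c ≠ 2) (ε : Fˣ) :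
    ((C c) ^ 2 - C (4 * (ε : F)) * p).degree = (d : WithBot ℕ) ∧
      IsCoprime ((C c) ^ 2 - C (4 * (ε : F)) * p) (C c - 2) := by
  have h40 : (4 : F) * ε ≠ 0 := mul_ne_zero h4 ε.ne_zero
  have hdegC : (C (4 * (ε : F)) * p).degree = (d : WithBot ℕ) := by
    rw [degree_C_mul h40, degree_eq_natDegree hp.ne_zero, hd]
  constructor
  · rw [degree_sub_eq_right_of_degree_lt, hdegC]
    rw [hdegC, ← C_pow]
    refine lt_of_le_of_lt degree_C_le ?_
    have h0 : 0 < d := h1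
    exact_mod_cast h0
  · have h2C : (2 : F[X]) = C 2 := (map_ofNat C 2).symm
    refine ⟨0, C (c - 2)⁻¹, ?_⟩
    rw [zero_mul, zero_add, h2C, ← map_sub, ← map_mul,
      inv_mul_cancel₀ (sub_ne_zero.mpr hc), map_one]

/-- Let `q` be odd and `p` monic irreducible of degree `d ≥ 1`.  The number of pairs
`(a, ε)` with `deg a ≤ ⌊d/2⌋`, `deg(a² - 4εp) = d` and `gcd(a² - 4εp, a - 2) = 1` is at
least `(q - 2 - d/2) q^{⌊d/2⌋+1}` when `d` is even, and at least
`(q - 1 - ⌈d/2⌉) q^{⌊d/2⌋+1}` when `d` is odd. -/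
theorem stmt19 {F : Type*} [Field F] [Fintype F] (hq : Odd (Fintype.card F))
    (p : F[X]) (hp : p.Monic) (hpirr : Irreducible p)
    (d : ℕ) (hd : p.natDegree = d) (h1 : 1 ≤ d) :
    (Even d → (Fintype.card F - 2 - d / 2) * Fintype.card F ^ (d / 2 + 1) ≤
      Nat.card {x : F[X] × Fˣ // x.1.degree ≤ (d / 2 : ℕ) ∧
        (x.1 ^ 2 - C (4 * (x.2 : F)) * p).degree = d ∧
        IsCoprime (x.1 ^ 2 - C (4 * (x.2 : F)) * p) (x.1 - 2)}) ∧
    (Odd d → (Fintype.card F - 1 - (d + 1) / 2) * Fintype.card F ^ (d / 2 + 1) ≤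
      Nat.card {x : F[X] × Fˣ // x.1.degree ≤ (d / 2 : ℕ) ∧
        (x.1 ^ 2 - C (4 * (x.2 : F)) * p).degree = d ∧
        IsCoprime (x.1 ^ 2 - C (4 * (x.2 : F)) * p) (x.1 - 2)}) := by
  classical
  set q := Fintype.card F with hqdef
  set m := d / 2 with hm
  -- basic numerology
  have hq2 : 2 ≤ q := Fintype.one_lt_card
  have hq3 : 3 ≤ q := by
    rcases hq with ⟨k, hk⟩
    omega
  have hchar : ringChar F ≠ 2 := by
    intro h
    have := FiniteField.even_card_of_char_two h
    rcases hq with ⟨k, hk⟩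
    omega
  have h2F : (2 : F) ≠ 0 := Ring.two_ne_zero hchar
  have h4 : (4 : F) ≠ 0 := by
    have : (4 : F) = 2 * 2 := by norm_num
    rw [this]
    exact mul_ne_zero h2F h2F
  have hQ : Fintype.card Fˣ = q - 1 := by
    rw [← Nat.card_eq_fintype_card, Nat.card_units, Nat.card_eq_fintype_card]
  -- the set of a's
  set A : Finset F[X] :=
    (Finset.univ : Finset (Fin (m + 1) → F)).image
      (fun v => ((degreeLTEquiv F (m + 1)).symm v : F[X])) with hA
  have hmemA : ∀ a : F[X], a ∈ A ↔ a.degree ≤ (m : ℕ) := by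
    intro a
    have hiff : a ∈ Polynomial.degreeLT F (m + 1) ↔ a.degree ≤ (m : ℕ) := by
      rw [Polynomial.degreeLT_succ_eq_degreeLE, Polynomial.mem_degreeLE]
    simp only [hA, mem_image, mem_univ, true_and]
    constructor
    · rintro ⟨v, rfl⟩
      exact hiff.mp ((degreeLTEquiv F (m + 1)).symm v).2
    · intro h
      refine ⟨degreeLTEquiv F (m + 1) ⟨a, hiff.mpr h⟩, ?_⟩
      simp
  have hAcard : A.card = q ^ (m + 1) := by
    have hinj : Function.Injective
        (fun v : Fin (m + 1) → F => ((degreeLTEquiv F (m + 1)).symm v : F[X])) := by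
      intro v w h
      exact (degreeLTEquiv F (m + 1)).symm.injective (Subtype.coe_injective h)
    rw [hA, Finset.card_image_of_injective _ hinj, card_univ, Fintype.card_fun,
      Fintype.card_fin]
  -- the good ε for each a
  set G : F[X] → Finset Fˣ := fun a => Finset.univ.filter (fun ε : Fˣ =>
      (a ^ 2 - C (4 * (ε : F)) * p).degree = (d : WithBot ℕ) ∧
      IsCoprime (a ^ 2 - C (4 * (ε : F)) * p) (a - 2)) with hG
  set T : Finset (F[X] × Fˣ) := A.biUnion (fun a => (G a).image (fun ε => (a, ε))) with hT
  have hmemT : ∀ x : F[X] × Fˣ, x ∈ T ↔ (x.1.degree ≤ ((d / 2 : ℕ) : WithBot ℕ) ∧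
      (x.1 ^ 2 - C (4 * (x.2 : F)) * p).degree = d ∧
      IsCoprime (x.1 ^ 2 - C (4 * (x.2 : F)) * p) (x.1 - 2)) := by
    intro x
    simp only [hT, mem_biUnion, mem_image]
    constructor
    · rintro ⟨a, ha, ε, hε, rfl⟩
      simp only [hG, mem_filter, mem_univ, true_and] at hε
      exact ⟨(hmemA a).mp ha, hε.1, hε.2⟩
    · rintro ⟨h1', h2', h3'⟩
      refine ⟨x.1, (hmemA x.1).mpr h1', x.2, ?_, rfl⟩
      simp only [hG, mem_filter, mem_univ, true_and]
      exact ⟨h2', h3'⟩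
  have hNatcard : Nat.card {x : F[X] × Fˣ // x.1.degree ≤ (d / 2 : ℕ) ∧
      (x.1 ^ 2 - C (4 * (x.2 : F)) * p).degree = d ∧
      IsCoprime (x.1 ^ 2 - C (4 * (x.2 : F)) * p) (x.1 - 2)} = T.card := by
    rw [← Nat.card_eq_finsetCard]
    exact Nat.card_congr (Equiv.subtypeEquivRight (fun x => (hmemT x).symm))
  have hTcard : T.card = ∑ a ∈ A, (G a).card := by
    rw [hT, Finset.card_biUnion]
    · refine Finset.sum_congr rfl (fun a _ => ?_)
      exact Finset.card_image_of_injective _ (fun x y h => by simpa using h)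
    · intro a₁ _ a₂ _ hne
      simp only [Finset.disjoint_left, mem_image]
      rintro x ⟨ε₁, _, rfl⟩ ⟨ε₂, _, hx⟩
      have hx' := (Prod.mk.injEq _ _ _ _).mp hx
      exact hne hx'.1.symm
  have h2poly : (2 : F[X]) = C 2 := (map_ofNat C 2).symm
  have h2memA : (2 : F[X]) ∈ A := by
    rw [hmemA, h2poly]
    exact degree_C_le.trans (by exact_mod_cast Nat.zero_le m)
  constructor
  · -- even case
    intro heven
    have hdm : 2 * m = d := by
      rcases heven with ⟨k, hk⟩
      omega
    have hm1 : 1 ≤ m := by omega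
    -- constants
    set A₀ : Finset F[X] := (Finset.univ : Finset F).image (fun c => C c) with hA₀
    have hA₀sub : A₀ ⊆ A := by
      intro x hx
      simp only [hA₀, mem_image, mem_univ, true_and] at hx
      rcases hx with ⟨c, rfl⟩
      rw [hmemA]
      exact degree_C_le.trans (by exact_mod_cast Nat.zero_le m)
    have hA₀card : A₀.card = q := by
      rw [hA₀, Finset.card_image_of_injective _ (C_injective), card_univ]
    have h2A₀ : (2 : F[X]) ∈ A₀ := by
      simp only [hA₀, mem_image, mem_univ, true_and]
      exact ⟨2, h2poly.symm⟩
    -- bound for non-constant a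
    have hrest : ∀ a ∈ A \ A₀, (q - 1) - (m + 1) ≤ (G a).card := by
      intro a ha
      rw [mem_sdiff] at ha
      have ha2 : a ≠ 2 := fun h => ha.2 (h ▸ h2A₀)
      have ham : a.natDegree ≤ m :=
        natDegree_le_of_degree_le ((hmemA a).mp ha.1)
      have := (auxBad h4 hp hpirr hd h1 (le_of_eq hdm) ha2 ham).1
      rwa [hQ] at this
    -- constants are all good
    have hconst : ∀ a ∈ A₀.erase 2, (G a).card = q - 1 := by
      intro a ha
      rw [mem_erase] at ha
      obtain ⟨c, rfl⟩ : ∃ c, C c = a := by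
        have := ha.2
        simp only [hA₀, mem_image, mem_univ, true_and] at this
        exact this
      have hc2 : c ≠ 2 := fun h => ha.1 (by rw [h, ← h2poly])
      have hall : G (C c) = Finset.univ := by
        refine Finset.eq_univ_iff_forall.mpr (fun ε => ?_)
        simp only [hG, mem_filter, mem_univ, true_and]
        have := auxConst h4 hp hd h1 hc2 ε
        rwa [h2poly]
      rw [hall, card_univ, hQ]
    have hsplit : ∑ a ∈ A, (G a).card
        = ∑ a ∈ A \ A₀, (G a).card + ∑ a ∈ A₀, (G a).card :=
      (Finset.sum_sdiff hA₀sub).symm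
    have hsum1 : (A.card - A₀.card) * ((q - 1) - (m + 1)) ≤ ∑ a ∈ A \ A₀, (G a).card := by
      rw [← Finset.card_sdiff_of_subset hA₀sub]
      calc (A \ A₀).card * ((q - 1) - (m + 1))
          = (A \ A₀).card • ((q - 1) - (m + 1)) := by rw [smul_eq_mul]
        _ ≤ ∑ a ∈ A \ A₀, (G a).card := Finset.card_nsmul_le_sum _ _ _ hrest
    have hsum2 : (q - 1) * (q - 1) ≤ ∑ a ∈ A₀, (G a).card := by
      have hsub : A₀.erase 2 ⊆ A₀ := Finset.erase_subset _ _
      calc (q - 1) * (q - 1) = ∑ a ∈ A₀.erase 2, (q - 1) := by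
            rw [Finset.sum_const, smul_eq_mul, Finset.card_erase_of_mem h2A₀, hA₀card]
        _ = ∑ a ∈ A₀.erase 2, (G a).card := Finset.sum_congr rfl
            (fun a ha => (hconst a ha).symm)
        _ ≤ ∑ a ∈ A₀, (G a).card :=
            Finset.sum_le_sum_of_subset hsub
    rw [hNatcard, hTcard, hsplit, hAcard, hA₀card] at *
    -- arithmetic
    have hPq : q ≤ q ^ (m + 1) := Nat.le_self_pow (by omega) q
    have harith : q * (q - 2 - m) ≤ (q - 1) * (q - 1) := by
      obtain ⟨r, hr⟩ := Nat.exists_eq_add_of_le hq3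
      have e1 : (3 + r) * (1 + r) = r * r + 4 * r + 3 := by ring
      have e2 : (2 + r) * (2 + r) = r * r + 4 * r + 4 := by ring
      have h' : q * (q - 2 - m) ≤ q * (q - 2) :=
        Nat.mul_le_mul_left q (by omega)
      refine h'.trans ?_
      have hq2' : q - 2 = 1 + r := by omega
      have hq1' : q - 1 = 2 + r := by omega
      rw [hq2', hq1', hr]
      calc (3 + r) * (1 + r) = r * r + 4 * r + 3 := e1
        _ ≤ r * r + 4 * r + 4 := by omega
        _ = (2 + r) * (2 + r) := e2.symm
    have hkey : q - 2 - m = (q - 1) - (m + 1) := by omega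
    rw [mul_comm (q - 2 - m), hkey]
    calc q ^ (m + 1) * ((q - 1) - (m + 1))
        = (q ^ (m + 1) - q) * ((q - 1) - (m + 1)) + q * ((q - 1) - (m + 1)) := by
          rw [← add_mul, Nat.sub_add_cancel hPq]
      _ ≤ (q ^ (m + 1) - q) * ((q - 1) - (m + 1)) + (q - 1) * (q - 1) := by
          have harith' : q * ((q - 1) - (m + 1)) ≤ (q - 1) * (q - 1) := by
            rw [← hkey]; exact harith
          exact Nat.add_le_add_left harith' _
      _ ≤ ∑ a ∈ A \ A₀, (G a).card + ∑ a ∈ A₀, (G a).card :=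
          Nat.add_le_add hsum1 hsum2
  · -- odd case
    intro hodd
    have hdm : 2 * m + 1 = d := by
      rcases hodd with ⟨k, hk⟩
      omega
    have hceil : (d + 1) / 2 = m + 1 := by omega
    have hrest : ∀ a ∈ A.erase 2, (q - 1) - m ≤ (G a).card := by
      intro a ha
      rw [mem_erase] at ha
      have ham : a.natDegree ≤ m := natDegree_le_of_degree_le ((hmemA a).mp ha.2)
      have := (auxBad h4 hp hpirr hd h1 (by omega) ha.1 ham).2 (by omega)
      rwa [hQ] at this
    have hsum : (q ^ (m + 1) - 1) * ((q - 1) - m) ≤ ∑ a ∈ A, (G a).card := by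
      calc (q ^ (m + 1) - 1) * ((q - 1) - m)
          = (A.erase 2).card * ((q - 1) - m) := by
            rw [Finset.card_erase_of_mem h2memA, hAcard]
        _ = (A.erase 2).card • ((q - 1) - m) := by rw [smul_eq_mul]
        _ ≤ ∑ a ∈ A.erase 2, (G a).card := Finset.card_nsmul_le_sum _ _ _ hrest
        _ ≤ ∑ a ∈ A, (G a).card :=
            Finset.sum_le_sum_of_subset (Finset.erase_subset _ _)
    rw [hNatcard, hTcard, hceil, mul_comm (q - 1 - (m + 1))]
    refine le_trans ?_ hsum
    -- arithmetic: q^(m+1) * (q - 1 - (m+1)) ≤ (q^(m+1) - 1) * (q - 1 - m)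
    by_cases hk : q - 1 - (m + 1) = 0
    · simp [hk]
    · have hqm : m + 3 ≤ q := by omega
      have hPq : q ≤ q ^ (m + 1) := Nat.le_self_pow (by omega) q
      have h1P : 1 ≤ q ^ (m + 1) := by omega
      set k := q - 1 - (m + 1) with hkdef
      have hsucc : q - 1 - m = k + 1 := by omega
      rw [hsucc]
      have hPsplit : q ^ (m + 1) * k = (q ^ (m + 1) - 1) * k + k := by
        conv_lhs => rw [← Nat.sub_add_cancel h1P]
        ring
      calc q ^ (m + 1) * k = (q ^ (m + 1) - 1) * k + k := hPsplit
        _ ≤ (q ^ (m + 1) - 1) * k + (q ^ (m + 1) - 1) := by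
            have : k ≤ q ^ (m + 1) - 1 := by omega
            omega
        _ = (q ^ (m + 1) - 1) * (k + 1) := by ring
end
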